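/- Suppose Σ ∈ P(X) is a weakly compatible irreducible collection of partial splits of X. Then any two split closures of Σ obtained using solely the combined M/Y-rule θ_{M/Y} (which at each step applies either θ_M or θ_Y, with (P) the property of being weakly compatible) are equal. -/

import Mathlib

/-!
Common definitions: partial splits of a finite set `X`, modelled as unordered
pairs (`Sym2`) of nonempty disjoint subsets of `X`; the `M`-, `Y`- and `Z`-
closure rules; weak compatibility; `X`-cycles and display; split closure
sequences and split closures.
-/

variable {X : Type*}

/-- `S` is a partial split of `X`: an unordered pair of nonempty disjoint subsets of `X`. -/
def IsPartialSplit (S : Sym2 (Set X)) : Prop :=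
  ∃ A B : Set X, S = s(A, B) ∧ A.Nonempty ∧ B.Nonempty ∧ Disjoint A B

/-- `S` is a full split of `X`: a partial split whose two parts cover `X`. -/
def IsFullSplit (S : Sym2 (Set X)) : Prop :=
  ∃ A B : Set X, S = s(A, B) ∧ A.Nonempty ∧ B.Nonempty ∧ Disjoint A B ∧ A ∪ B = Set.univ

/-- The partial split `S` extends the partial split `T`. -/
def SplitExtends (S T : Sym2 (Set X)) : Prop :=
  ∃ A B C D : Set X, S = s(A, B) ∧ T = s(C, D) ∧ C ⊆ A ∧ D ⊆ B

/-- `Sig ⪯ Sig'`: every partial split of `Sig` is extended by one of `Sig'`. -/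
def Preceq (Sig Sig' : Set (Sym2 (Set X))) : Prop :=
  ∀ S ∈ Sig, ∃ T ∈ Sig', SplitExtends T S

/-- `Sig⁻`: the set obtained from `Sig` by removing all redundant partial splits,
i.e. those extended by a different element of `Sig`. -/
def sreduce (Sig : Set (Sym2 (Set X))) : Set (Sym2 (Set X)) :=
  {S | S ∈ Sig ∧ ¬ ∃ T ∈ Sig, T ≠ S ∧ SplitExtends T S}

/-- `Sig ∈ P(X)`: `Sig` is an irreducible collection of partial splits of `X`. -/
def InPX (Sig : Set (Sym2 (Set X))) : Prop :=
  (∀ S ∈ Sig, IsPartialSplit S) ∧ sreduce Sig = Sig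

/-- Two partial splits are compatible if some part of one is disjoint from some part
of the other. -/
def SplitCompatible (S T : Sym2 (Set X)) : Prop :=
  ∃ A B C D : Set X, S = s(A, B) ∧ T = s(C, D) ∧ A ∩ C = ∅

/-- Weak compatibility of a (multi)triple of partial splits: for every choice of parts,
one of the four distinguished triple intersections is empty. -/
def WeaklyCompatTriple (S1 S2 S3 : Sym2 (Set X)) : Prop :=
  ∀ A1 B1 A2 B2 A3 B3 : Set X,
    S1 = s(A1, B1) → S2 = s(A2, B2) → S3 = s(A3, B3) →
    A1 ∩ A2 ∩ A3 = ∅ ∨ B1 ∩ B2 ∩ A3 = ∅ ∨ B1 ∩ A2 ∩ B3 = ∅ ∨ A1 ∩ B2 ∩ B3 = ∅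

/-- A collection of partial splits is weakly compatible if every three of its members are. -/
def WeaklyCompatible (Sig : Set (Sym2 (Set X))) : Prop :=
  ∀ S1 ∈ Sig, ∀ S2 ∈ Sig, ∀ S3 ∈ Sig, WeaklyCompatTriple S1 S2 S3

/-- Condition of the `M`-rule for the parts `A1|B1`, `A2|B2`. -/
def mCond (A1 B1 A2 B2 : Set X) : Prop :=
  (A1 ∩ A2).Nonempty ∧ (B1 ∩ B2).Nonempty

/-- Output of the `M`-rule applied with respect to the parts `A1|B1`, `A2|B2`. -/
def mOut (A1 B1 A2 B2 : Set X) : Set (Sym2 (Set X)) :=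
  {s(A1, B1), s(A2, B2), s(A1 ∩ A2, B1 ∪ B2), s(B1 ∩ B2, A1 ∪ A2)}

/-- Condition of the `Y`-rule for the parts `A1|B1`, `A2|B2`, `A3|B3`. -/
def yCond (A1 B1 A2 B2 A3 B3 : Set X) : Prop :=
  (A1 ∩ A2 ∩ A3).Nonempty ∧ (B1 ∩ B2 ∩ A3).Nonempty ∧
    (B1 ∩ A2 ∩ B3).Nonempty ∧ A1 ∩ B2 ∩ B3 = ∅

/-- Output of the `Y`-rule applied with respect to the parts `A1|B1`, `A2|B2`, `A3|B3`. -/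
def yOut (A1 B1 A2 B2 A3 B3 : Set X) : Set (Sym2 (Set X)) :=
  {s(B1 ∪ (B2 ∩ B3), A1), s(A2 ∪ (A1 ∩ B3), B2), s(A3 ∪ (A1 ∩ B2), B3)}

/-- Condition of the `Z`-rule for the parts `A1|B1`, `A2|B2`. -/
def zCond (A1 B1 A2 B2 : Set X) : Prop :=
  (A1 ∩ A2).Nonempty ∧ (A2 ∩ B1).Nonempty ∧ (B1 ∩ B2).Nonempty ∧ A1 ∩ B2 = ∅

/-- Output of the `Z`-rule applied with respect to the parts `A1|B1`, `A2|B2`. -/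
def zOut (A1 B1 A2 B2 : Set X) : Set (Sym2 (Set X)) :=
  {s(B1 ∪ B2, A1), s(B2, A1 ∪ A2)}

/-- `Sig'` is obtained from `Sig` by a single application of the `Y`-rule. -/
def yStep (Sig Sig' : Set (Sym2 (Set X))) : Prop :=
  ∃ A1 B1 A2 B2 A3 B3 : Set X,
    s(A1, B1) ∈ Sig ∧ s(A2, B2) ∈ Sig ∧ s(A3, B3) ∈ Sig ∧
    s(A1, B1) ≠ s(A2, B2) ∧ s(A1, B1) ≠ s(A3, B3) ∧ s(A2, B2) ≠ s(A3, B3) ∧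
    yCond A1 B1 A2 B2 A3 B3 ∧
    Sig' = sreduce (Sig ∪ yOut A1 B1 A2 B2 A3 B3)

/-- `Sig'` is obtained from `Sig` by a single application of the `M`-rule. -/
def mStep (Sig Sig' : Set (Sym2 (Set X))) : Prop :=
  ∃ A1 B1 A2 B2 : Set X,
    s(A1, B1) ∈ Sig ∧ s(A2, B2) ∈ Sig ∧ s(A1, B1) ≠ s(A2, B2) ∧
    mCond A1 B1 A2 B2 ∧
    Sig' = sreduce (Sig ∪ mOut A1 B1 A2 B2)

/-- `Sig'` is obtained from `Sig` by a single non-trivial application of the `Y`-rule. -/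
def yStepNT (Sig Sig' : Set (Sym2 (Set X))) : Prop :=
  ∃ A1 B1 A2 B2 A3 B3 : Set X,
    s(A1, B1) ∈ Sig ∧ s(A2, B2) ∈ Sig ∧ s(A3, B3) ∈ Sig ∧
    s(A1, B1) ≠ s(A2, B2) ∧ s(A1, B1) ≠ s(A3, B3) ∧ s(A2, B2) ≠ s(A3, B3) ∧
    yCond A1 B1 A2 B2 A3 B3 ∧
    ¬ Preceq (sreduce (yOut A1 B1 A2 B2 A3 B3)) Sig ∧
    Sig' = sreduce (Sig ∪ yOut A1 B1 A2 B2 A3 B3)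

/-- `Sig'` is obtained from `Sig` by a single non-trivial application of the `M`-rule. -/
def mStepNT (Sig Sig' : Set (Sym2 (Set X))) : Prop :=
  ∃ A1 B1 A2 B2 : Set X,
    s(A1, B1) ∈ Sig ∧ s(A2, B2) ∈ Sig ∧ s(A1, B1) ≠ s(A2, B2) ∧
    mCond A1 B1 A2 B2 ∧
    ¬ Preceq (sreduce (mOut A1 B1 A2 B2)) Sig ∧
    Sig' = sreduce (Sig ∪ mOut A1 B1 A2 B2)

/-- `Sig` is closed under the `Y`-rule: every application of the `Y`-rule to `Sig` is trivial. -/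
def yClosed (Sig : Set (Sym2 (Set X))) : Prop :=
  ∀ A1 B1 A2 B2 A3 B3 : Set X,
    s(A1, B1) ∈ Sig → s(A2, B2) ∈ Sig → s(A3, B3) ∈ Sig →
    s(A1, B1) ≠ s(A2, B2) → s(A1, B1) ≠ s(A3, B3) → s(A2, B2) ≠ s(A3, B3) →
    yCond A1 B1 A2 B2 A3 B3 →
    Preceq (sreduce (yOut A1 B1 A2 B2 A3 B3)) Sig

/-- `Sig` is closed under the `M`-rule: every application of the `M`-rule to `Sig` is trivial. -/
def mClosed (Sig : Set (Sym2 (Set X))) : Prop :=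
  ∀ A1 B1 A2 B2 : Set X,
    s(A1, B1) ∈ Sig → s(A2, B2) ∈ Sig → s(A1, B1) ≠ s(A2, B2) →
    mCond A1 B1 A2 B2 →
    Preceq (sreduce (mOut A1 B1 A2 B2)) Sig

/-- A split closure sequence for `Sig` of length `n` with respect to the property `P` and
the non-trivial single-application relation `stepNT`: a strictly `⪯`-increasing sequence
in `P(X)` starting at `Sig` in which every term satisfying `P` is followed by the result
of one non-trivial application of the rule. -/
def IsClosureSeq (P : Set (Sym2 (Set X)) → Prop)
    (stepNT : Set (Sym2 (Set X)) → Set (Sym2 (Set X)) → Prop)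
    (Sig : Set (Sym2 (Set X))) (n : ℕ) (f : ℕ → Set (Sym2 (Set X))) : Prop :=
  f 0 = Sig ∧ (∀ i ≤ n, InPX (f i)) ∧
    (∀ i < n, P (f i) ∧ stepNT (f i) (f (i + 1)) ∧
      Preceq (f i) (f (i + 1)) ∧ f i ≠ f (i + 1))

/-- `cl` is a split closure of `Sig` (with `cl = none` playing the role of `ω`):
the last element of a split closure sequence for `Sig`, which either satisfies `P` and is
closed under the rule, or fails `P`, in which case it is replaced by `ω`. -/
def IsSplitClosure (P : Set (Sym2 (Set X)) → Prop)
    (stepNT : Set (Sym2 (Set X)) → Set (Sym2 (Set X)) → Prop)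
    (closed : Set (Sym2 (Set X)) → Prop)
    (Sig : Set (Sym2 (Set X))) (cl : Option (Set (Sym2 (Set X)))) : Prop :=
  ∃ (n : ℕ) (f : ℕ → Set (Sym2 (Set X))),
    IsClosureSeq P stepNT Sig n f ∧
    ((P (f n) ∧ closed (f n) ∧ cl = some (f n)) ∨ (¬ P (f n) ∧ cl = none))

/-- Split closure with respect to the `Y`-rule, `(P)` being weak compatibility. -/
def IsYClosure (Sig : Set (Sym2 (Set X))) (cl : Option (Set (Sym2 (Set X)))) : Prop :=
  IsSplitClosure WeaklyCompatible yStepNT yClosed Sig cl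

/-- Split closure with respect to the `M`-rule, `(P)` holding for all collections. -/
def IsMClosure (Sig : Set (Sym2 (Set X))) (cl : Option (Set (Sym2 (Set X)))) : Prop :=
  IsSplitClosure (fun _ => True) mStepNT mClosed Sig cl

/-- Split closure with respect to the combined `M/Y`-rule, `(P)` being weak compatibility. -/
def IsMYClosure (Sig : Set (Sym2 (Set X))) (cl : Option (Set (Sym2 (Set X)))) : Prop :=
  IsSplitClosure WeaklyCompatible
    (fun s s' => mStepNT s s' ∨ yStepNT s s') (fun s => mClosed s ∧ yClosed s) Sig cl

/-- `C` is an `X`-cycle: a connected graph on the vertex set `X` (`|X| ≥ 3`) in which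
every vertex has degree `2`. -/
def IsXCycle (C : SimpleGraph X) : Prop :=
  C.Connected ∧ 3 ≤ Nat.card X ∧ ∀ v : X, (C.neighborSet v).ncard = 2

/-- The partial split `S` is displayed by the `X`-cycle `C`: there are two distinct
edges of `C` whose deletion leaves one component containing one part of `S` and
another component containing the other part. -/
def DisplaysSplit (C : SimpleGraph X) (S : Sym2 (Set X)) : Prop :=
  ∃ A B : Set X, S = s(A, B) ∧
    ∃ e1 e2 : Sym2 X, e1 ∈ C.edgeSet ∧ e2 ∈ C.edgeSet ∧ e1 ≠ e2 ∧
      ∃ c1 c2 : (C.deleteEdges {e1, e2}).ConnectedComponent,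
        c1 ≠ c2 ∧ A ⊆ c1.supp ∧ B ⊆ c2.supp

/-- A collection of partial splits is displayed by `C` if each of its members is. -/
def DisplaysColl (C : SimpleGraph X) (Sig : Set (Sym2 (Set X))) : Prop :=
  ∀ S ∈ Sig, DisplaysSplit C S

/-- `cl ≠ ω` and the underlying collection is displayed by `C`. -/
def OptionDisplays (C : SimpleGraph X) (cl : Option (Set (Sym2 (Set X)))) : Prop :=
  ∃ Sig, cl = some Sig ∧ DisplaysColl C Sig

/-- The ground set `A ∪ B` of a partial split `A|B`. -/
def splitGround (S : Sym2 (Set X)) : Set X :=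
  ⋃₀ {A : Set X | A ∈ S}

/-- Membership in `P_ω(X) = P(X) ∪ {ω}`. -/
def InPOmega (x : Option (Set (Sym2 (Set X)))) : Prop :=
  x = none ∨ ∃ Sig, x = some Sig ∧ InPX Sig

/-- The order `⪯` on `P_ω(X)`, with `Sig ⪯ ω` for all `Sig` and `ω ⪯ ω`. -/
def PreceqO (x y : Option (Set (Sym2 (Set X)))) : Prop :=
  y = none ∨ ∃ Sig Sig', x = some Sig ∧ y = some Sig' ∧ Preceq Sig Sig'

/-- Split closure as a relation on `P_ω(X)`, with `⟨ω⟩ = ω`. -/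
def ClosO (cls : Set (Sym2 (Set X)) → Option (Set (Sym2 (Set X))) → Prop)
    (x y : Option (Set (Sym2 (Set X)))) : Prop :=
  (x = none ∧ y = none) ∨ ∃ Sig, x = some Sig ∧ cls Sig y

/-!
Extension of partial splits is a partial order, and `⪯` is antisymmetric on `P(X)`.
Both rules are monotone: if the splits a rule is applied to in `Σ` are extended by splits
of `Σ'`, the output is extended by the output of the same rule applied in `Σ'` (for the
`Y`-rule, the condition `A₁ ∩ Ã₂ ∩ Ã₃ = ∅` there is supplied by weak compatibility of `Σ'`).
Hence if `Σ'` is weakly compatible and closed under both rules, `Σ ⪯ Σ'` persists along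
every `M/Y` closure sequence for `Σ`. A split closure `≠ ω` is such a `Σ'`, so two of them
lie below each other and coincide; and one closure cannot be `ω` while another is not, as
anything below a weakly compatible collection is weakly compatible.
-/

lemma isPartialSplit_mk_iff {A B : Set X} :
    IsPartialSplit s(A, B) ↔ A.Nonempty ∧ B.Nonempty ∧ Disjoint A B := by
  constructor
  · rintro ⟨C, D, hE, hC, hD, hCD⟩
    rcases Sym2.eq_iff.1 hE with ⟨rfl, rfl⟩ | ⟨rfl, rfl⟩
    · exact ⟨hC, hD, hCD⟩
    · exact ⟨hD, hC, hCD.symm⟩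
  · rintro ⟨hA, hB, hAB⟩
    exact ⟨A, B, rfl, hA, hB, hAB⟩

lemma mk_ne_mk_of_inter_nonempty {A B C D : Set X} (hAB : Disjoint A B)
    (hA : (A ∩ C).Nonempty) (hB : (B ∩ C).Nonempty) : s(A, B) ≠ s(C, D) := by
  intro h
  rcases Sym2.eq_iff.1 h with ⟨rfl, -⟩ | ⟨-, rfl⟩
  · exact hB.ne_empty hAB.symm.inter_eq
  · exact hA.ne_empty hAB.inter_eq

lemma splitExtends_mk {A B C D : Set X} (hC : C ⊆ A) (hD : D ⊆ B) :
    SplitExtends s(A, B) s(C, D) :=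
  ⟨A, B, C, D, rfl, rfl, hC, hD⟩

lemma SplitExtends.refl (S : Sym2 (Set X)) : SplitExtends S S := by
  induction S using Sym2.ind with
  | _ A B => exact splitExtends_mk subset_rfl subset_rfl

lemma SplitExtends.exists_of_mk {S : Sym2 (Set X)} {C D : Set X}
    (h : SplitExtends S s(C, D)) : ∃ A B, S = s(A, B) ∧ C ⊆ A ∧ D ⊆ B := by
  obtain ⟨A, B, C', D', rfl, hT, hC, hD⟩ := h
  rcases Sym2.eq_iff.1 hT with ⟨rfl, rfl⟩ | ⟨rfl, rfl⟩
  · exact ⟨A, B, rfl, hC, hD⟩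
  · exact ⟨B, A, Sym2.eq_swap, hD, hC⟩

lemma SplitExtends.trans {S T U : Sym2 (Set X)} (hST : SplitExtends S T)
    (hTU : SplitExtends T U) : SplitExtends S U := by
  obtain ⟨A, B, C, D, rfl, rfl, hC, hD⟩ := hTU
  obtain ⟨A', B', rfl, hA, hB⟩ := hST.exists_of_mk
  exact splitExtends_mk (hC.trans hA) (hD.trans hB)

lemma splitGround_mk (A B : Set X) : splitGround s(A, B) = A ∪ B := by
  ext x
  simp [splitGround]

lemma SplitExtends.splitGround_subset {S T : Sym2 (Set X)} (h : SplitExtends S T) :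
    splitGround T ⊆ splitGround S := by
  obtain ⟨A, B, C, D, rfl, rfl, hC, hD⟩ := h
  simpa only [splitGround_mk] using Set.union_subset_union hC hD

lemma SplitExtends.eq_of_splitGround_subset {S T : Sym2 (Set X)} (hS : IsPartialSplit S)
    (h : SplitExtends S T) (hg : splitGround S ⊆ splitGround T) : S = T := by
  obtain ⟨A, B, C, D, rfl, rfl, hC, hD⟩ := h
  have hAB := (isPartialSplit_mk_iff.1 hS).2.2
  rw [splitGround_mk, splitGround_mk] at hg
  have hAC : A ⊆ C := fun x hx =>
    (hg (Or.inl hx)).resolve_right fun hx' => Set.disjoint_left.1 hAB hx (hD hx')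
  have hBD : B ⊆ D := fun x hx =>
    (hg (Or.inr hx)).resolve_left fun hx' => Set.disjoint_right.1 hAB hx (hC hx')
  rw [hAC.antisymm hC, hBD.antisymm hD]

lemma exists_splitExtends_mem_sreduce {F : Set (Sym2 (Set X))} (hF : F.Finite)
    (hps : ∀ S ∈ F, IsPartialSplit S) {S : Sym2 (Set X)} (hS : S ∈ F) :
    ∃ T ∈ sreduce F, SplitExtends T S := by
  obtain ⟨T, ⟨hTF, hTS⟩, hmax⟩ :=
    (hF.subset fun T (hT : T ∈ F ∧ SplitExtends T S) => hT.1).exists_maximalFor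
      splitGround _ ⟨S, hS, .refl S⟩
  refine ⟨T, ⟨hTF, ?_⟩, hTS⟩
  rintro ⟨U, hUF, hUT, hext⟩
  exact hUT (hext.eq_of_splitGround_subset (hps U hUF)
    (hmax ⟨hUF, hext.trans hTS⟩ hext.splitGround_subset))

lemma preceq_refl (Sig : Set (Sym2 (Set X))) : Preceq Sig Sig :=
  fun S hS => ⟨S, hS, .refl S⟩

lemma Preceq.trans {Sig Sig' Sig'' : Set (Sym2 (Set X))} (h : Preceq Sig Sig')
    (h' : Preceq Sig' Sig'') : Preceq Sig Sig'' := by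
  intro S hS
  obtain ⟨T, hT, hTS⟩ := h S hS
  obtain ⟨U, hU, hUT⟩ := h' T hT
  exact ⟨U, hU, hUT.trans hTS⟩

lemma Preceq.subset {Sig Sig' : Set (Sym2 (Set X))} (h : Preceq Sig Sig')
    (h' : Preceq Sig' Sig) (hPX : InPX Sig) (hPX' : InPX Sig') : Sig ⊆ Sig' := by
  intro S hS
  obtain ⟨T, hT, hTS⟩ := h S hS
  obtain ⟨S', hS', hS'T⟩ := h' T hT
  have hS'S : S' = S := by
    by_contra hne
    exact (hPX.2.symm ▸ hS : S ∈ sreduce Sig).2 ⟨S', hS', hne, hS'T.trans hTS⟩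
  subst hS'S
  rwa [← hTS.eq_of_splitGround_subset (hPX'.1 T hT) hS'T.splitGround_subset]

lemma Preceq.antisymm {Sig Sig' : Set (Sym2 (Set X))} (h : Preceq Sig Sig')
    (h' : Preceq Sig' Sig) (hPX : InPX Sig) (hPX' : InPX Sig') : Sig = Sig' :=
  (h.subset h' hPX hPX').antisymm (h'.subset h hPX' hPX)

lemma Preceq.of_sreduce {F Sig : Set (Sym2 (Set X))} (hF : F.Finite)
    (hps : ∀ S ∈ F, IsPartialSplit S) (h : Preceq (sreduce F) Sig) : Preceq F Sig := by
  intro S hS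
  obtain ⟨T, hT, hTS⟩ := exists_splitExtends_mem_sreduce hF hps hS
  obtain ⟨U, hU, hUT⟩ := h T hT
  exact ⟨U, hU, hUT.trans hTS⟩

lemma Preceq.sreduce_union {D E Sig : Set (Sym2 (Set X))} (hD : Preceq D Sig)
    (hE : Preceq E Sig) : Preceq (sreduce (D ∪ E)) Sig :=
  fun S hS => hS.1.elim (hD S) (hE S)

lemma WeaklyCompatTriple.of_splitExtends {S1 S2 S3 T1 T2 T3 : Sym2 (Set X)}
    (h : WeaklyCompatTriple T1 T2 T3) (h1 : SplitExtends T1 S1) (h2 : SplitExtends T2 S2)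
    (h3 : SplitExtends T3 S3) : WeaklyCompatTriple S1 S2 S3 := by
  rintro A1 B1 A2 B2 A3 B3 rfl rfl rfl
  obtain ⟨A1', B1', rfl, s1, t1⟩ := h1.exists_of_mk
  obtain ⟨A2', B2', rfl, s2, t2⟩ := h2.exists_of_mk
  obtain ⟨A3', B3', rfl, s3, t3⟩ := h3.exists_of_mk
  have mono {P1 P2 P3 Q1 Q2 Q3 : Set X} (hP1 : P1 ⊆ Q1) (hP2 : P2 ⊆ Q2) (hP3 : P3 ⊆ Q3)
      (hQ : Q1 ∩ Q2 ∩ Q3 = ∅) : P1 ∩ P2 ∩ P3 = ∅ :=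
    Set.subset_empty_iff.1 (hQ ▸ Set.inter_subset_inter (Set.inter_subset_inter hP1 hP2) hP3)
  rcases h _ _ _ _ _ _ rfl rfl rfl with h | h | h | h
  exacts [.inl (mono s1 s2 s3 h), .inr (.inl (mono t1 t2 s3 h)),
    .inr (.inr (.inl (mono t1 s2 t3 h))), .inr (.inr (.inr (mono s1 t2 t3 h)))]

lemma WeaklyCompatible.of_preceq {Sig Sig' : Set (Sym2 (Set X))}
    (hwc : WeaklyCompatible Sig') (h : Preceq Sig Sig') : WeaklyCompatible Sig := by
  intro S1 h1 S2 h2 S3 h3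
  obtain ⟨T1, hT1, e1⟩ := h S1 h1
  obtain ⟨T2, hT2, e2⟩ := h S2 h2
  obtain ⟨T3, hT3, e3⟩ := h S3 h3
  exact (hwc T1 hT1 T2 hT2 T3 hT3).of_splitExtends e1 e2 e3

lemma mOut_finite (A1 B1 A2 B2 : Set X) : (mOut A1 B1 A2 B2).Finite := by
  simp [mOut]

lemma yOut_finite (A1 B1 A2 B2 A3 B3 : Set X) : (yOut A1 B1 A2 B2 A3 B3).Finite := by
  simp [yOut]

lemma mOut_preceq_mOut {A1 B1 A2 B2 A1' B1' A2' B2' : Set X} (s1 : A1 ⊆ A1')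
    (t1 : B1 ⊆ B1') (s2 : A2 ⊆ A2') (t2 : B2 ⊆ B2') :
    Preceq (mOut A1 B1 A2 B2) (mOut A1' B1' A2' B2') := by
  intro S hS
  simp only [mOut, Set.mem_insert_iff, Set.mem_singleton_iff] at hS
  rcases hS with rfl | rfl | rfl | rfl
  · exact ⟨_, by simp [mOut], splitExtends_mk s1 t1⟩
  · exact ⟨_, by simp [mOut], splitExtends_mk s2 t2⟩
  · exact ⟨_, by simp [mOut], splitExtends_mk (Set.inter_subset_inter s1 s2)
      (Set.union_subset_union t1 t2)⟩
  · exact ⟨_, by simp [mOut], splitExtends_mk (Set.inter_subset_inter t1 t2)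
      (Set.union_subset_union s1 s2)⟩

lemma yOut_preceq_yOut {A1 B1 A2 B2 A3 B3 A1' B1' A2' B2' A3' B3' : Set X}
    (s1 : A1 ⊆ A1') (t1 : B1 ⊆ B1') (s2 : A2 ⊆ A2') (t2 : B2 ⊆ B2') (s3 : A3 ⊆ A3')
    (t3 : B3 ⊆ B3') : Preceq (yOut A1 B1 A2 B2 A3 B3) (yOut A1' B1' A2' B2' A3' B3') := by
  intro S hS
  simp only [yOut, Set.mem_insert_iff, Set.mem_singleton_iff] at hS
  rcases hS with rfl | rfl | rfl
  · exact ⟨_, by simp [yOut], splitExtends_mk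
      (Set.union_subset_union t1 (Set.inter_subset_inter t2 t3)) s1⟩
  · exact ⟨_, by simp [yOut], splitExtends_mk
      (Set.union_subset_union s2 (Set.inter_subset_inter s1 t3)) t2⟩
  · exact ⟨_, by simp [yOut], splitExtends_mk
      (Set.union_subset_union s3 (Set.inter_subset_inter s1 t2)) t3⟩

lemma isPartialSplit_of_mem_mOut {A1 B1 A2 B2 : Set X} (h1 : IsPartialSplit s(A1, B1))
    (h2 : IsPartialSplit s(A2, B2)) (hc : mCond A1 B1 A2 B2) :
    ∀ S ∈ mOut A1 B1 A2 B2, IsPartialSplit S := by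
  obtain ⟨hA1, hB1, hd1⟩ := isPartialSplit_mk_iff.1 h1
  obtain ⟨-, -, hd2⟩ := isPartialSplit_mk_iff.1 h2
  intro S hS
  simp only [mOut, Set.mem_insert_iff, Set.mem_singleton_iff] at hS
  rcases hS with rfl | rfl | rfl | rfl
  · exact h1
  · exact h2
  · exact isPartialSplit_mk_iff.2 ⟨hc.1, hB1.mono Set.subset_union_left,
      Disjoint.union_right (hd1.mono_left Set.inter_subset_left)
        (hd2.mono_left Set.inter_subset_right)⟩
  · exact isPartialSplit_mk_iff.2 ⟨hc.2, hA1.mono Set.subset_union_left,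
      Disjoint.union_right (hd1.symm.mono_left Set.inter_subset_left)
        (hd2.symm.mono_left Set.inter_subset_right)⟩

lemma isPartialSplit_of_mem_yOut {A1 B1 A2 B2 A3 B3 : Set X}
    (h1 : IsPartialSplit s(A1, B1)) (h2 : IsPartialSplit s(A2, B2))
    (h3 : IsPartialSplit s(A3, B3)) (he : A1 ∩ B2 ∩ B3 = ∅) :
    ∀ S ∈ yOut A1 B1 A2 B2 A3 B3, IsPartialSplit S := by
  obtain ⟨hA1, hB1, hd1⟩ := isPartialSplit_mk_iff.1 h1
  obtain ⟨hA2, hB2, hd2⟩ := isPartialSplit_mk_iff.1 h2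
  obtain ⟨hA3, hB3, hd3⟩ := isPartialSplit_mk_iff.1 h3
  have he' : ∀ x ∈ A1, x ∈ B2 → x ∉ B3 := fun x hx1 hx2 hx3 =>
    he.subset ⟨⟨hx1, hx2⟩, hx3⟩
  intro S hS
  simp only [yOut, Set.mem_insert_iff, Set.mem_singleton_iff] at hS
  rcases hS with rfl | rfl | rfl
  · exact isPartialSplit_mk_iff.2 ⟨hB1.mono Set.subset_union_left, hA1,
      Disjoint.union_left hd1.symm
        (Set.disjoint_left.2 fun x hx hx1 => he' x hx1 hx.1 hx.2)⟩
  · exact isPartialSplit_mk_iff.2 ⟨hA2.mono Set.subset_union_left, hB2,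
      Disjoint.union_left hd2 (Set.disjoint_left.2 fun x hx hx2 => he' x hx.1 hx2 hx.2)⟩
  · exact isPartialSplit_mk_iff.2 ⟨hA3.mono Set.subset_union_left, hB3,
      Disjoint.union_left hd3 (Set.disjoint_left.2 fun x hx hx3 => he' x hx.1 hx.2 hx3)⟩

lemma mClosed.preceq_mOut {Sig : Set (Sym2 (Set X))} (hPX : InPX Sig) (hm : mClosed Sig)
    {A1 B1 A2 B2 : Set X} (h1 : s(A1, B1) ∈ Sig) (h2 : s(A2, B2) ∈ Sig)
    (hc : mCond A1 B1 A2 B2) : Preceq (mOut A1 B1 A2 B2) Sig := by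
  by_cases hne : s(A1, B1) = s(A2, B2)
  · rcases Sym2.eq_iff.1 hne with ⟨rfl, rfl⟩ | ⟨rfl, rfl⟩
    · intro S hS
      obtain rfl : S = s(A1, B1) := by simpa [mOut, Sym2.eq_swap] using hS
      exact ⟨_, h1, .refl _⟩
    · exact absurd (isPartialSplit_mk_iff.1 (hPX.1 _ h1)).2.2.inter_eq hc.1.ne_empty
  · exact .of_sreduce (mOut_finite _ _ _ _)
      (isPartialSplit_of_mem_mOut (hPX.1 _ h1) (hPX.1 _ h2) hc)
      (hm _ _ _ _ h1 h2 hne hc)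

lemma yClosed.preceq_yOut {Sig : Set (Sym2 (Set X))} (hPX : InPX Sig)
    (hwc : WeaklyCompatible Sig) (hy : yClosed Sig) {A1 B1 A2 B2 A3 B3 : Set X}
    (h1 : s(A1, B1) ∈ Sig) (h2 : s(A2, B2) ∈ Sig) (h3 : s(A3, B3) ∈ Sig)
    (n1 : (A1 ∩ A2 ∩ A3).Nonempty) (n2 : (B1 ∩ B2 ∩ A3).Nonempty)
    (n3 : (B1 ∩ A2 ∩ B3).Nonempty) : Preceq (yOut A1 B1 A2 B2 A3 B3) Sig := by
  have he : A1 ∩ B2 ∩ B3 = ∅ := by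
    rcases hwc _ h1 _ h2 _ h3 _ _ _ _ _ _ rfl rfl rfl with h | h | h | h
    exacts [absurd h n1.ne_empty, absurd h n2.ne_empty, absurd h n3.ne_empty, h]
  have hd1 := (isPartialSplit_mk_iff.1 (hPX.1 _ h1)).2.2
  have hd2 := (isPartialSplit_mk_iff.1 (hPX.1 _ h2)).2.2
  refine .of_sreduce (yOut_finite _ _ _ _ _ _)
    (isPartialSplit_of_mem_yOut (hPX.1 _ h1) (hPX.1 _ h2) (hPX.1 _ h3) he)
    (hy _ _ _ _ _ _ h1 h2 h3 ?_ ?_ ?_ ⟨n1, n2, n3, he⟩)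
  · exact mk_ne_mk_of_inter_nonempty hd1 (n1.mono Set.inter_subset_left)
      (n3.mono Set.inter_subset_left)
  · exact mk_ne_mk_of_inter_nonempty hd1 (n1.mono fun x hx => ⟨hx.1.1, hx.2⟩)
      (n2.mono fun x hx => ⟨hx.1.1, hx.2⟩)
  · exact mk_ne_mk_of_inter_nonempty hd2 (n1.mono fun x hx => ⟨hx.1.2, hx.2⟩)
      (n2.mono fun x hx => ⟨hx.1.2, hx.2⟩)

lemma Preceq.of_mStep {D D' Sig : Set (Sym2 (Set X))} (hPX : InPX Sig) (hm : mClosed Sig)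
    (hD : Preceq D Sig) (hstep : mStep D D') : Preceq D' Sig := by
  obtain ⟨A1, B1, A2, B2, h1, h2, -, hc, rfl⟩ := hstep
  obtain ⟨T1, hT1, e1⟩ := hD _ h1
  obtain ⟨A1', B1', rfl, s1, t1⟩ := e1.exists_of_mk
  obtain ⟨T2, hT2, e2⟩ := hD _ h2
  obtain ⟨A2', B2', rfl, s2, t2⟩ := e2.exists_of_mk
  have hc' : mCond A1' B1' A2' B2' :=
    ⟨hc.1.mono (Set.inter_subset_inter s1 s2), hc.2.mono (Set.inter_subset_inter t1 t2)⟩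
  exact hD.sreduce_union ((mOut_preceq_mOut s1 t1 s2 t2).trans (hm.preceq_mOut hPX hT1 hT2 hc'))

lemma Preceq.of_yStep {D D' Sig : Set (Sym2 (Set X))} (hPX : InPX Sig)
    (hwc : WeaklyCompatible Sig) (hy : yClosed Sig) (hD : Preceq D Sig) (hstep : yStep D D') :
    Preceq D' Sig := by
  obtain ⟨A1, B1, A2, B2, A3, B3, h1, h2, h3, -, -, -, ⟨n1, n2, n3, -⟩, rfl⟩ := hstep
  obtain ⟨T1, hT1, e1⟩ := hD _ h1
  obtain ⟨A1', B1', rfl, s1, t1⟩ := e1.exists_of_mk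
  obtain ⟨T2, hT2, e2⟩ := hD _ h2
  obtain ⟨A2', B2', rfl, s2, t2⟩ := e2.exists_of_mk
  obtain ⟨T3, hT3, e3⟩ := hD _ h3
  obtain ⟨A3', B3', rfl, s3, t3⟩ := e3.exists_of_mk
  have mono {P1 P2 P3 Q1 Q2 Q3 : Set X} (hP1 : P1 ⊆ Q1) (hP2 : P2 ⊆ Q2) (hP3 : P3 ⊆ Q3)
      (hP : (P1 ∩ P2 ∩ P3).Nonempty) : (Q1 ∩ Q2 ∩ Q3).Nonempty :=
    hP.mono (Set.inter_subset_inter (Set.inter_subset_inter hP1 hP2) hP3)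
  exact hD.sreduce_union ((yOut_preceq_yOut s1 t1 s2 t2 s3 t3).trans
    (hy.preceq_yOut hPX hwc hT1 hT2 hT3 (mono s1 s2 s3 n1) (mono t1 t2 s3 n2)
      (mono t1 s2 t3 n3)))

lemma Preceq.of_mStepNT_or_yStepNT {D D' Sig : Set (Sym2 (Set X))} (hPX : InPX Sig)
    (hwc : WeaklyCompatible Sig) (hm : mClosed Sig) (hy : yClosed Sig) (hD : Preceq D Sig) :
    mStepNT D D' ∨ yStepNT D D' → Preceq D' Sig
  | .inl ⟨A1, B1, A2, B2, h1, h2, hne, hc, _, hD'⟩ =>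
    hD.of_mStep hPX hm ⟨A1, B1, A2, B2, h1, h2, hne, hc, hD'⟩
  | .inr ⟨A1, B1, A2, B2, A3, B3, h1, h2, h3, hne12, hne13, hne23, hc, _, hD'⟩ =>
    hD.of_yStep hPX hwc hy ⟨A1, B1, A2, B2, A3, B3, h1, h2, h3, hne12, hne13, hne23, hc, hD'⟩

lemma IsClosureSeq.preceq_last {P : Set (Sym2 (Set X)) → Prop}
    {step : Set (Sym2 (Set X)) → Set (Sym2 (Set X)) → Prop} {Sig : Set (Sym2 (Set X))}
    {n : ℕ} {f : ℕ → Set (Sym2 (Set X))} (hc : IsClosureSeq P step Sig n f) :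
    Preceq Sig (f n) := by
  suffices ∀ i ≤ n, Preceq Sig (f i) from this n le_rfl
  intro i hi
  induction i with
  | zero => exact hc.1 ▸ preceq_refl Sig
  | succ k ih => exact (ih (by omega)).trans (hc.2.2 k (by omega)).2.2.1

lemma IsClosureSeq.last_preceq {P : Set (Sym2 (Set X)) → Prop}
    {step : Set (Sym2 (Set X)) → Set (Sym2 (Set X)) → Prop} {Sig T : Set (Sym2 (Set X))}
    {n : ℕ} {f : ℕ → Set (Sym2 (Set X))} (hc : IsClosureSeq P step Sig n f)
    (hSig : Preceq Sig T) (hstep : ∀ D D', Preceq D T → step D D' → Preceq D' T) :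
    Preceq (f n) T := by
  suffices ∀ i ≤ n, Preceq (f i) T from this n le_rfl
  intro i hi
  induction i with
  | zero => exact hc.1 ▸ hSig
  | succ k ih => exact hstep _ _ (ih (by omega)) (hc.2.2 k (by omega)).2.1

lemma IsClosureSeq.last_preceq_of_closed {Sig : Set (Sym2 (Set X))} {n n' : ℕ}
    {f f' : ℕ → Set (Sym2 (Set X))}
    (hc : IsClosureSeq WeaklyCompatible (fun s s' => mStepNT s s' ∨ yStepNT s s') Sig n f)
    (hc' : IsClosureSeq WeaklyCompatible (fun s s' => mStepNT s s' ∨ yStepNT s s') Sig n' f')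
    (hwc : WeaklyCompatible (f' n')) (hcl : mClosed (f' n') ∧ yClosed (f' n')) :
    Preceq (f n) (f' n') :=
  hc.last_preceq hc'.preceq_last fun _ _ hD =>
    hD.of_mStepNT_or_yStepNT (hc'.2.1 n' le_rfl) hwc hcl.1 hcl.2

theorem statement13_general {X : Type*} (Sig : Set (Sym2 (Set X)))
    (cl1 cl2 : Option (Set (Sym2 (Set X))))
    (h1 : IsMYClosure Sig cl1) (h2 : IsMYClosure Sig cl2) :
    cl1 = cl2 := by
  obtain ⟨n1, f1, hc1, hend1⟩ := h1
  obtain ⟨n2, f2, hc2, hend2⟩ := h2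
  rcases hend1 with ⟨hwc1, hcl1, rfl⟩ | ⟨hnwc1, rfl⟩ <;>
    rcases hend2 with ⟨hwc2, hcl2, rfl⟩ | ⟨hnwc2, rfl⟩
  · exact congrArg some <| (hc1.last_preceq_of_closed hc2 hwc2 hcl2).antisymm
      (hc2.last_preceq_of_closed hc1 hwc1 hcl1) (hc1.2.1 n1 le_rfl) (hc2.2.1 n2 le_rfl)
  · exact absurd (hwc1.of_preceq (hc2.last_preceq_of_closed hc1 hwc1 hcl1)) hnwc2
  · exact absurd (hwc2.of_preceq (hc1.last_preceq_of_closed hc2 hwc2 hcl2)) hnwc1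
  · rfl

/-- for a weakly compatible `Σ ∈ P(X)`, any two split closures of `Σ`
obtained solely via the combined `M/Y`-rule (with `(P)` being weak compatibility) are equal. -/
theorem statement13 {X : Type*} [Fintype X] (Sig : Set (Sym2 (Set X)))
    (hPX : InPX Sig) (hwc : WeaklyCompatible Sig)
    (cl1 cl2 : Option (Set (Sym2 (Set X))))
    (h1 : IsMYClosure Sig cl1) (h2 : IsMYClosure Sig cl2) :
    cl1 = cl2 :=
  statement13_general Sig cl1 cl2 h1 h2
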